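/- Let X = ⨆_{k≥1} D^{k+1} be the disjoint union of disks of strictly increasing dimension, A = ⨆_{k≥1} S^k their boundary spheres, Y = [0,1], and f : A → Y given on the k-th sphere by the constant map with value 1/k. In the closure-space pushout (Z, c_Z), with U = ⨆_k (D^{k+1} \ S^k) ⊆ Z, one has c_Z U = U ∪ {1/k : k ≥ 1} and c_Z(c_Z U) = U ∪ {1/k : k ≥ 1} ∪ {0}; hence c_Z is not idempotent and (Z, c_Z) is not a topological space. -/

import Mathlib

/-! Every point of a disk is a limit of interior points, so `c_X (X \ A) = X`. Hence for any
`B ⊆ Z` containing all open cells, `c_Z B` consists of the open cells, the attaching points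
`f(A) = {1/k}` and the `[0,1]`-closure of `B ∩ Y`. Applied to `U` this gives `U ∪ {1/k}`;
applied once more it adds the limit point `0`, which is not attached to any cell. -/

open Classical in
/-- The map `g : X → Z = Y ⊔ (X \ A)` of the pushout of `f : A → Y` along `A ↪ X`:
`g = f` on `A` and the identity on `X \ A`. -/
noncomputable def pushoutMap {X Y : Type*} (A : Set X) (f : X → Y) (x : X) :
    Y ⊕ {x : X // x ∉ A} :=
  if h : x ∈ A then Sum.inl (f x) else Sum.inr ⟨x, h⟩

/-- The closure operator of the pushout `Z = Y ⊔ (X \ A)`: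
`c_Z B = c_Y (B ∩ Y) ∪ g (c_X (B ∩ (X \ A)))`. -/
noncomputable def pushoutClosure {X Y : Type*} (A : Set X) (f : X → Y)
    (cX : Set X → Set X) (cY : Set Y → Set Y)
    (B : Set (Y ⊕ {x : X // x ∉ A})) : Set (Y ⊕ {x : X // x ∉ A}) :=
  Sum.inl '' cY (Sum.inl ⁻¹' B) ∪
    pushoutMap A f '' cX (Subtype.val '' (Sum.inr ⁻¹' B))

open Set Filter Topology

section ClosurePushout

variable {X Y : Type*} {A : Set X} {f : X → Y} {cX : Set X → Set X} {cY : Set Y → Set Y}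

theorem range_pushoutMap : range (pushoutMap A f) = range Sum.inr ∪ Sum.inl '' (f '' A) := by
  ext z
  constructor
  · rintro ⟨x, rfl⟩
    by_cases hx : x ∈ A
    · exact Or.inr ⟨f x, mem_image_of_mem f hx, by simp [pushoutMap, hx]⟩
    · exact Or.inl ⟨⟨x, hx⟩, by simp [pushoutMap, hx]⟩
  · rintro (⟨x, rfl⟩ | ⟨_, ⟨x, hx, rfl⟩, rfl⟩)
    · exact ⟨x, by simp [pushoutMap, x.2]⟩
    · exact ⟨x, by simp [pushoutMap, hx]⟩

theorem pushoutClosure_range_inr_union (hA : cX {x | x ∉ A} = univ) (T : Set Y) :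
    pushoutClosure A f cX cY (range Sum.inr ∪ Sum.inl '' T) =
      range Sum.inr ∪ Sum.inl '' (cY T ∪ f '' A) := by
  rw [pushoutClosure, preimage_union, preimage_union, preimage_inl_range_inr,
    preimage_image_eq _ Sum.inl_injective, empty_union, preimage_range, preimage_inr_image_inl,
    union_empty, image_univ, Subtype.range_coe_subtype, hA, image_univ, range_pushoutMap,
    image_union, union_left_comm]

theorem pushoutClosure_range_inr (hA : cX {x | x ∉ A} = univ) (hY : cY ∅ = ∅) :
    pushoutClosure A f cX cY (range Sum.inr) = range Sum.inr ∪ Sum.inl '' (f '' A) := by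
  simpa [hY] using pushoutClosure_range_inr_union (f := f) (cY := cY) hA ∅

theorem pushoutClosure_range_inr_not_idempotent (hA : cX {x | x ∉ A} = univ) (hY : cY ∅ = ∅)
    {S S' : Set Y} (hfA : f '' A = S) (hS : cY S = S ∪ S') (hS' : ¬S' ⊆ S) :
    letI cZ := pushoutClosure A f cX cY
    cZ (range Sum.inr) = range Sum.inr ∪ Sum.inl '' S ∧
      cZ (cZ (range Sum.inr)) = range Sum.inr ∪ Sum.inl '' (S ∪ S') ∧
      cZ (cZ (range Sum.inr)) ≠ cZ (range Sum.inr) := by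
  have h1 := pushoutClosure_range_inr (f := f) hA hY
  rw [hfA] at h1
  have h2 := pushoutClosure_range_inr_union (f := f) (cY := cY) hA S
  rw [hS, hfA, union_right_comm, union_self] at h2
  refine ⟨h1, h1 ▸ h2, fun h => hS' fun y hy => ?_⟩
  have hy' : (Sum.inl y : Y ⊕ {x // x ∉ A}) ∈ range Sum.inr ∪ Sum.inl '' S := by
    rw [← h1, ← h, h1, h2]
    exact Or.inr (mem_image_of_mem _ (Or.inr hy))
  simpa using hy'

end ClosurePushout

theorem dense_setOf_norm_ne {E : Type*} [NormedAddCommGroup E] [NormedSpace ℝ E] {r : ℝ}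
    (hr : r ≠ 0) : Dense {x : Metric.closedBall (0 : E) r | ‖(x : E)‖ ≠ r} := by
  refine Subtype.dense_iff.2 <| (closure_ball 0 hr).symm.subset.trans <| closure_mono ?_
  intro x hx
  exact ⟨⟨x, Metric.ball_subset_closedBall hx⟩, (mem_ball_zero_iff.1 hx).ne, rfl⟩

theorem Filter.Tendsto.closure_range_eq_insert {X : Type*} [TopologicalSpace X] [T2Space X]
    {u : ℕ → X} {a : X} (hu : Tendsto u atTop (𝓝 a)) : closure (range u) = insert a (range u) :=
  (closure_minimal (subset_insert _ _) hu.isCompact_insert_range.isClosed).antisymm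
    (insert_subset (mem_closure_of_tendsto hu (.of_forall mem_range_self)) subset_closure)

theorem closure_preimage_coe_of_subset {X : Type*} [TopologicalSpace X] {s t : Set X}
    (h : t ⊆ s) : closure ((↑) ⁻¹' t : Set s) = (↑) ⁻¹' closure t := by
  rw [IsInducing.subtypeVal.closure_eq_preimage_closure_image, Subtype.image_preimage_coe,
    inter_eq_right.2 h]

theorem closure_setOf_eq_one_div_nat :
    closure {x : ℝ | ∃ k : ℕ, 1 ≤ k ∧ x = 1 / k} =
      insert 0 {x : ℝ | ∃ k : ℕ, 1 ≤ k ∧ x = 1 / k} := by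
  have h : {x : ℝ | ∃ k : ℕ, 1 ≤ k ∧ x = 1 / k} = range fun n : ℕ => 1 / ((n : ℝ) + 1) := by
    ext x
    constructor
    · rintro ⟨k, hk, rfl⟩
      exact ⟨k - 1, by simp [Nat.cast_sub hk]⟩
    · rintro ⟨n, rfl⟩
      exact mem_ofPred.2 ⟨n + 1, by omega, by push_cast; rfl⟩
  rw [h]
  exact tendsto_one_div_add_atTop_nhds_zero_nat.closure_range_eq_insert

/-- Example 3.3: attach cells of strictly increasing dimension to `[0, 1]`: the `k`-th
cell (`k ≥ 1`) is a `(k+1)`-disk attached along the constant map `S^k → [0,1]` with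
value `1/k`.  `X = ⨆_{k ≥ 1} D^{k+1}` carries the componentwise topological closure and
`A = ⨆_{k ≥ 1} S^k` is the coproduct of the boundary spheres.  In the closure-space
pushout `(Z, c_Z)`, with `U = ⨆_k (D^{k+1} \ S^k)`, one has
`c_Z U = U ∪ {1/k : k ≥ 1}` and `c_Z² U = U ∪ {1/k : k ≥ 1} ∪ {0}`; hence `c_Z` is not
idempotent and `(Z, c_Z)` is not a topological space. -/
theorem finite_type_cell_attachment_not_topological :
    letI J : Type := {k : ℕ // 1 ≤ k}
    letI X : Type := (k : J) × ↥(Metric.closedBall (0 : EuclideanSpace ℝ (Fin (k.1 + 1))) 1)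
    letI A : Set X := {p | ‖(p.2 : EuclideanSpace ℝ (Fin (p.1.1 + 1)))‖ = 1}
    letI Y : Type := ↥(Set.Icc (0 : ℝ) 1)
    letI f : X → Y := fun p =>
      ⟨1 / (p.1.1 : ℝ), ⟨by positivity,
        div_le_one_of_le₀ (by exact_mod_cast p.1.2) (by positivity)⟩⟩
    letI cX : Set X → Set X := fun S => {p | p.2 ∈ closure {x | (⟨p.1, x⟩ : X) ∈ S}}
    letI cY : Set Y → Set Y := fun S => closure S
    letI cZ := pushoutClosure A f cX cY
    letI U : Set (Y ⊕ {x : X // x ∉ A}) := Set.range Sum.inr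
    cZ U = U ∪ Sum.inl '' {y : Y | ∃ k : ℕ, 1 ≤ k ∧ (y : ℝ) = 1 / k} ∧
    cZ (cZ U) =
      U ∪ Sum.inl '' ({y : Y | ∃ k : ℕ, 1 ≤ k ∧ (y : ℝ) = 1 / k} ∪ {y : Y | (y : ℝ) = 0}) ∧
    cZ (cZ U) ≠ cZ U := by
  refine pushoutClosure_range_inr_not_idempotent ?dense closure_empty ?image ?closure ?zero
  case dense => exact eq_univ_of_forall fun p => dense_setOf_norm_ne one_ne_zero p.2
  case image =>
    ext y
    constructor
    · rintro ⟨p, -, rfl⟩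
      exact ⟨p.1.1, p.1.2, rfl⟩
    · rintro ⟨k, hk, hy⟩
      obtain ⟨v, hv⟩ := (NormedSpace.sphere_nonempty (E := EuclideanSpace ℝ (Fin (k + 1)))
        (x := 0)).2 zero_le_one
      exact ⟨⟨⟨k, hk⟩, v, Metric.sphere_subset_closedBall hv⟩, mem_sphere_zero_iff_norm.1 hv,
        Subtype.ext hy.symm⟩
  case closure =>
    have h : {x : ℝ | ∃ k : ℕ, 1 ≤ k ∧ x = 1 / k} ⊆ Icc 0 1 := by
      rintro _ ⟨k, hk, rfl⟩
      exact ⟨by positivity, div_le_one_of_le₀ (by exact_mod_cast hk) (by positivity)⟩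
    refine (closure_preimage_coe_of_subset h).trans ?_
    rw [closure_setOf_eq_one_div_nat, insert_eq, preimage_union, union_comm]
    rfl
  case zero =>
    intro h
    obtain ⟨k, hk, h0⟩ := @h ⟨0, left_mem_Icc.2 zero_le_one⟩ rfl
    exact (one_div_pos.2 (Nat.cast_pos.2 hk)).ne h0
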